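/- arXiv:1101.5896 — 3 statements merged into one kernel-verified Lean document; each statement's English description precedes it below -/
import Mathlib

section
/- Let A be a saturation on a set S and let JJ(A) be the operator defined by JJ(A)(V) = ⋃{Z ⊆ V | Z splits A}, i.e. a ∈ JJ(A)(V) iff there exists Z ⊆ S with a ∈ Z ⊆ V and Z splits A. Then JJ(A) is the greatest reduction compatible with A; that is, JJ(A) is a reduction, A ⧓ JJ(A), and for every reduction J on S: A ⧓ J if and only if J ⊆ JJ(A). -/
/-- `Compat O O'` : `O` is compatible with `O'` (written `O ⧓ O'`). -/
def Compat {S : Type*} (O O' : Set S → Set S) : Prop :=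
  ∀ U V : Set S, (O U ∩ O' V).Nonempty → (U ∩ O' V).Nonempty

/-- `Z` splits the operator `O`. -/
def Splits {S : Type*} (Z : Set S) (O : Set S → Set S) : Prop :=
  ∀ U : Set S, (O U ∩ Z).Nonempty → (U ∩ Z).Nonempty

/-- A saturation: monotone, idempotent and expansive operator. -/
def IsSaturation {S : Type*} (A : Set S → Set S) : Prop :=
  (∀ U V : Set S, U ⊆ V → A U ⊆ A V) ∧ (∀ U : Set S, A (A U) = A U) ∧
  (∀ U : Set S, U ⊆ A U)

/-- A reduction: monotone, idempotent and contractive operator. -/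
def IsReduction {S : Type*} (J : Set S → Set S) : Prop :=
  (∀ U V : Set S, U ⊆ V → J U ⊆ J V) ∧ (∀ U : Set S, J (J U) = J U) ∧
  (∀ U : Set S, J U ⊆ U)

/-- `JJ(A)(V) = ⋃{Z ⊆ V | Z splits A}`. -/
def JJ {S : Type*} (A : Set S → Set S) : Set S → Set S :=
  fun V => {a | ∃ Z : Set S, a ∈ Z ∧ Z ⊆ V ∧ Splits Z A}

/-!
Compatibility `A ⧓ J` says exactly that every value `J V` splits `A`, and splitting sets are
closed under unions, so `JJ A V` is the largest subset of `V` splitting `A`. Hence `JJ A` is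
idempotent and `Z` splits `A` iff `Z ⊆ JJ A Z`; so for an idempotent contractive `J`,
`J V ⊆ JJ A V` for all `V` forces `J V = J (J V) ⊆ JJ A (J V)`, i.e. `J V` splits `A`.
-/

section

variable {S : Type*}

theorem compat_iff_forall_splits {O O' : Set S → Set S} :
    Compat O O' ↔ ∀ V, Splits (O' V) O :=
  ⟨fun h V U => h U V, fun h U V => h V U⟩

variable (A : Set S → Set S)

theorem JJ_subset (V : Set S) : JJ A V ⊆ V :=
  fun _ ⟨_, haZ, hZV, _⟩ => hZV haZ

theorem JJ_mono {U V : Set S} (h : U ⊆ V) : JJ A U ⊆ JJ A V :=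
  fun _ ⟨Z, haZ, hZU, hZ⟩ => ⟨Z, haZ, hZU.trans h, hZ⟩

theorem splits_JJ (V : Set S) : Splits (JJ A V) A := by
  rintro U ⟨a, haAU, Z, haZ, hZV, hZ⟩
  obtain ⟨b, hbU, hbZ⟩ := hZ U ⟨a, haAU, haZ⟩
  exact ⟨b, hbU, Z, hbZ, hZV, hZ⟩

variable {A}

theorem Splits.subset_JJ {Z V : Set S} (hZ : Splits Z A) (hZV : Z ⊆ V) : Z ⊆ JJ A V :=
  fun _ haZ => ⟨Z, haZ, hZV, hZ⟩

theorem splits_iff_subset_JJ {Z : Set S} : Splits Z A ↔ Z ⊆ JJ A Z := by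
  refine ⟨fun hZ => hZ.subset_JJ subset_rfl, fun h => ?_⟩
  rw [h.antisymm (JJ_subset A Z)]
  exact splits_JJ A Z

variable (A)

theorem JJ_JJ (V : Set S) : JJ A (JJ A V) = JJ A V :=
  (JJ_subset A _).antisymm ((splits_JJ A V).subset_JJ subset_rfl)

theorem isReduction_JJ : IsReduction (JJ A) :=
  ⟨fun _ _ => JJ_mono A, JJ_JJ A, JJ_subset A⟩

theorem compat_JJ : Compat A (JJ A) :=
  compat_iff_forall_splits.2 (splits_JJ A)

theorem compat_iff_forall_subset_JJ {J : Set S → Set S} (hJJ : ∀ V, J (J V) = J V)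
    (hJ : ∀ V, J V ⊆ V) : Compat A J ↔ ∀ V, J V ⊆ JJ A V := by
  rw [compat_iff_forall_splits]
  refine ⟨fun h V => (h V).subset_JJ (hJ V), fun h V => splits_iff_subset_JJ.2 ?_⟩
  calc J V = J (J V) := (hJJ V).symm
    _ ⊆ JJ A (J V) := h (J V)

end

theorem JJ_greatest_reduction_compatible_general {S : Type*} (A : Set S → Set S) :
    IsReduction (JJ A) ∧ Compat A (JJ A) ∧
    (∀ J : Set S → Set S, IsReduction J →
      (Compat A J ↔ ∀ V : Set S, J V ⊆ JJ A V)) :=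
  ⟨isReduction_JJ A, compat_JJ A, fun _ ⟨_, hJJ, hJ⟩ => compat_iff_forall_subset_JJ A hJJ hJ⟩

/-- `JJ(A)` is the greatest reduction compatible with the saturation `A`. -/
theorem JJ_greatest_reduction_compatible {S : Type*} (A : Set S → Set S)
    (hA : IsSaturation A) :
    IsReduction (JJ A) ∧ Compat A (JJ A) ∧
    (∀ J : Set S → Set S, IsReduction J →
      (Compat A J ↔ ∀ V : Set S, J V ⊆ JJ A V)) :=
  JJ_greatest_reduction_compatible_general A
end

section
/- For every set S, every saturation A on S and every reduction J on S: AA(JJ(AA(J))) = AA(J) and JJ(AA(JJ(A))) = JJ(A). Moreover A ⊆ AA(JJ(A)) and J ⊆ JJ(AA(J)), and both AA and JJ are antitone (J ⊆ J' implies AA(J') ⊆ AA(J), and A ⊆ A' implies JJ(A') ⊆ JJ(A)). -/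
/-- `AA(J)`: `a ∈ AA(J)(U)` iff every `J(V)` containing `a` overlaps `U`. -/
def AA {S : Type*} (J : Set S → Set S) : Set S → Set S :=
  fun U => {a | ∀ V : Set S, a ∈ J V → (U ∩ J V).Nonempty}

/-!
`AA` and `JJ` are antitone and `A ≤ AA (JJ A)`, `J ≤ JJ (AA J)`: an antitone Galois connection
between operators. The identities `AA ∘ JJ ∘ AA = AA` and `JJ ∘ AA ∘ JJ = JJ` then follow by
sandwiching, e.g. `AA J ≤ AA (JJ (AA J)) ≤ AA J`, the second step by antitonicity applied to
`J ≤ JJ (AA J)`.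
-/

section GaloisConnection

variable {S : Type*}

theorem Splits.mono {Z : Set S} {A A' : Set S → Set S} (h : Splits Z A') (hle : A ≤ A') :
    Splits Z A :=
  fun U ⟨b, hbA, hbZ⟩ => h U ⟨b, hle U hbA, hbZ⟩

theorem splits_AA_apply (J : Set S → Set S) (V : Set S) : Splits (J V) (AA J) :=
  fun _ ⟨_, hbA, hbJ⟩ => hbA V hbJ

theorem JJ_apply_subset (A : Set S → Set S) (V : Set S) : JJ A V ⊆ V :=
  fun _ ⟨_, haZ, hZV, _⟩ => hZV haZ

theorem le_AA_JJ (A : Set S → Set S) : A ≤ AA (JJ A) := by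
  intro U a ha V ⟨Z, haZ, hZV, hZ⟩
  obtain ⟨b, hbU, hbZ⟩ := hZ U ⟨a, ha, haZ⟩
  exact ⟨b, hbU, Z, hbZ, hZV, hZ⟩

theorem le_JJ_AA {J : Set S → Set S} (hJ : ∀ V, J V ⊆ V) : J ≤ JJ (AA J) :=
  fun V _ ha => ⟨J V, ha, hJ V, splits_AA_apply J V⟩

/-- A point of `J V` lies in `J' (J V)`, a subset of `J V`, since `J V = J (J V) ⊆ J' (J V)`. -/
theorem AA_anti {J J' : Set S → Set S} (hJ : ∀ V, J (J V) = J V) (hJ' : ∀ V, J' V ⊆ V)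
    (hle : J ≤ J') : AA J' ≤ AA J := by
  intro U a ha V haV
  have haJ' : a ∈ J' (J V) := hle _ ((hJ V).symm ▸ haV)
  obtain ⟨b, hbU, hbJ'⟩ := ha (J V) haJ'
  exact ⟨b, hbU, hJ' _ hbJ'⟩

theorem JJ_anti {A A' : Set S → Set S} (hle : A ≤ A') : JJ A' ≤ JJ A :=
  fun _ _ ⟨Z, haZ, hZV, hZ⟩ => ⟨Z, haZ, hZV, hZ.mono hle⟩

end GaloisConnection

theorem galois_connection_consequences_general {S : Type*} (A J : Set S → Set S)
    (hJ : IsReduction J) :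
    AA (JJ (AA J)) = AA J ∧
    JJ (AA (JJ A)) = JJ A ∧
    (∀ U : Set S, A U ⊆ AA (JJ A) U) ∧
    (∀ V : Set S, J V ⊆ JJ (AA J) V) ∧
    (∀ J' : Set S → Set S, IsReduction J' → (∀ U : Set S, J U ⊆ J' U) →
      ∀ U : Set S, AA J' U ⊆ AA J U) ∧
    (∀ A' : Set S → Set S, IsSaturation A' → (∀ U : Set S, A U ⊆ A' U) →
      ∀ U : Set S, JJ A' U ⊆ JJ A U) := by
  obtain ⟨-, hJidem, hJcontr⟩ := hJ
  refine ⟨?_, ?_, le_AA_JJ A, le_JJ_AA hJcontr,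
    fun J' hJ' hle => AA_anti hJidem hJ'.2.2 hle, fun A' _ hle => JJ_anti hle⟩
  · exact le_antisymm (AA_anti hJidem (JJ_apply_subset _) (le_JJ_AA hJcontr)) (le_AA_JJ _)
  · exact le_antisymm (JJ_anti (le_AA_JJ A)) (le_JJ_AA (JJ_apply_subset A))

/-- Consequences of the Galois connection: `AA∘JJ∘AA = AA`, `JJ∘AA∘JJ = JJ`,
`A ⊆ AA(JJ(A))`, `J ⊆ JJ(AA(J))`, and both `AA` and `JJ` are antitone. -/
theorem galois_connection_consequences {S : Type*} (A J : Set S → Set S)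
    (hA : IsSaturation A) (hJ : IsReduction J) :
    AA (JJ (AA J)) = AA J ∧
    JJ (AA (JJ A)) = JJ A ∧
    (∀ U : Set S, A U ⊆ AA (JJ A) U) ∧
    (∀ V : Set S, J V ⊆ JJ (AA J) V) ∧
    (∀ J' : Set S → Set S, IsReduction J' → (∀ U : Set S, J U ⊆ J' U) →
      ∀ U : Set S, AA J' U ⊆ AA J U) ∧
    (∀ A' : Set S → Set S, IsSaturation A' → (∀ U : Set S, A U ⊆ A' U) →
      ∀ U : Set S, JJ A' U ⊆ JJ A U) :=
  galois_connection_consequences_general A J hJ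
end

section
/- Let r be a binary relation between sets X and S. Then r⁻*∘r⁻ is the greatest saturation on S compatible with the reduction r∘r*; that is, AA(r∘r*) = r⁻*∘r⁻. In particular, for every saturation A on S with A ⧓ (r∘r*), one has A ⊆ r⁻*∘r⁻. -/
/-- Direct image `r(D) = {a ∈ S | ∃ x ∈ D, x r a}`. -/
def rDir {X S : Type*} (r : X → S → Prop) (D : Set X) : Set S :=
  {a | ∃ x ∈ D, r x a}

/-- Inverse image `r⁻(U) = {x ∈ X | ∃ a ∈ U, x r a}`. -/
def rInv {X S : Type*} (r : X → S → Prop) (U : Set S) : Set X :=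
  {x | ∃ a ∈ U, r x a}

/-- `r*(U) = {x ∈ X | r({x}) ⊆ U}`. -/
def rStar {X S : Type*} (r : X → S → Prop) (U : Set S) : Set X :=
  {x | ∀ a : S, r x a → a ∈ U}

/-- `r⁻*(D) = {a ∈ S | r⁻({a}) ⊆ D}`. -/
def rInvStar {X S : Type*} (r : X → S → Prop) (D : Set X) : Set S :=
  {a | ∀ x : X, r x a → x ∈ D}

/-!
The reduction `J = r ∘ r*` is contractive, and whenever `x r a` the point `a` lies in
`J (r {x})`, since `x ∈ r* (r {x})`. Hence `a ∈ AA J U` forces `U` to meet `r {x}` for every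
`x r a`, which says `a ∈ r⁻* (r⁻ U)`; conversely a witness `x ∈ r* V` of `a ∈ J V` that also
relates to some `b ∈ U` puts `b` in `U ∩ J V`. Maximality holds for any operator compatible
with any `J`: if `a ∈ A U ∩ J V`, compatibility yields a point of `U ∩ J V`.
-/

theorem Compat.subset_AA {S : Type*} {A J : Set S → Set S} (h : Compat A J) (U : Set S) :
    A U ⊆ AA J U :=
  fun _ ha V haJ => h U V ⟨_, ha, haJ⟩

section Relation

variable {X S : Type*} (r : X → S → Prop)

theorem rDir_rStar_subset (V : Set S) : rDir r (rStar r V) ⊆ V := by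
  rintro a ⟨x, hx, hxa⟩
  exact hx a hxa

theorem mem_rDir_rStar_fiber {x : X} {a : S} (hxa : r x a) :
    a ∈ rDir r (rStar r {b | r x b}) :=
  ⟨x, fun _ hb => hb, hxa⟩

theorem AA_rDir_rStar :
    AA (fun U : Set S => rDir r (rStar r U)) = fun U : Set S => rInvStar r (rInv r U) := by
  funext U
  ext a
  constructor
  · intro ha x hxa
    obtain ⟨b, hbU, hbJ⟩ := ha _ (mem_rDir_rStar_fiber r hxa)
    exact ⟨b, hbU, rDir_rStar_subset r _ hbJ⟩
  · rintro ha V ⟨x, hxV, hxa⟩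
    obtain ⟨b, hbU, hxb⟩ := ha x hxa
    exact ⟨b, hbU, x, hxV, hxb⟩

end Relation

/-- `r⁻*∘r⁻` is the greatest saturation compatible with the reduction `r∘r*`:
`AA(r∘r*) = r⁻*∘r⁻`, and every saturation compatible with `r∘r*` is contained
in `r⁻*∘r⁻`. -/
theorem representable_is_reduced {X S : Type*} (r : X → S → Prop) :
    AA (fun U : Set S => rDir r (rStar r U)) =
      (fun U : Set S => rInvStar r (rInv r U)) ∧
    (∀ A : Set S → Set S, IsSaturation A →
      Compat A (fun U : Set S => rDir r (rStar r U)) →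
      ∀ U : Set S, A U ⊆ rInvStar r (rInv r U)) :=
  ⟨AA_rDir_rStar r, fun _ _ hA U =>
    (hA.subset_AA U).trans (congrFun (AA_rDir_rStar r) U).subset⟩
end
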